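/- For every a : ZMod d × ZMod d → ℂ with Σ_{r,s} |a_{r,s}|² = 1, the operator P_a is an orthogonal projection of trace d: P_aᴴ = P_a, P_a · P_a = P_a, and Tr P_a = d. -/

import Mathlib

/-!
`P_a = d⁻¹ T Tᴴ` for `T = Σ_{r,s} a_{rs} U_{rs}ᴴ ⊗ |U_{rs}⟩⟩ : ℂ^d → (ℂ^d)^⊗3`.
The Weyl–Heisenberg matrices are unitary and Hilbert–Schmidt orthogonal,
`⟨⟨U_{rs}|U_{r's'}⟩⟩ = d δ`, so `Tᴴ T = d Σ |a_{rs}|² U_{rs} U_{rs}ᴴ = d`. Hence `d^{-1/2} T`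
is an isometry, `P_a` is its range projection, and `Tr P_a = d⁻¹ Tr (Tᴴ T) = d`.
-/

open Matrix Kronecker BigOperators

noncomputable def omega (d : ℕ) : ℂ := Complex.exp (2 * Real.pi * Complex.I / d)

noncomputable def WH (d : ℕ) [NeZero d] (p q : ZMod d) : Matrix (ZMod d) (ZMod d) ℂ :=
  fun j k => if j = k + p then omega d ^ (q.val * k.val) else 0

noncomputable def Pa (d : ℕ) [NeZero d] (a : ZMod d × ZMod d → ℂ) :
    Matrix (ZMod d × ZMod d × ZMod d) (ZMod d × ZMod d × ZMod d) ℂ :=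
  fun x y => (d : ℂ)⁻¹ * ∑ r : ZMod d, ∑ s : ZMod d, ∑ r' : ZMod d, ∑ s' : ZMod d,
    a (r, s) * (starRingEnd ℂ) (a (r', s')) * ((WH d r s)ᴴ * WH d r' s') x.1 y.1 *
      WH d r s x.2.1 x.2.2 * (starRingEnd ℂ) (WH d r' s' y.2.1 y.2.2)

namespace Matrix

section StarProjection

variable {𝕜 m n : Type*} [RCLike 𝕜] [Fintype m] [Fintype n] [DecidableEq n]
  {T : Matrix m n 𝕜} {c : ℝ}

theorem isStarProjection_smul_mul_conjTranspose (hc : c ≠ 0) (hT : Tᴴ * T = c • 1) :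
    IsStarProjection (c⁻¹ • (T * Tᴴ)) where
  isIdempotentElem := by
    rw [IsIdempotentElem, smul_mul_smul_comm, Matrix.mul_assoc, ← Matrix.mul_assoc Tᴴ, hT,
      Matrix.smul_mul, Matrix.mul_smul, Matrix.one_mul, smul_smul, mul_assoc,
      inv_mul_cancel₀ hc, mul_one]
  isSelfAdjoint := ((isHermitian_mul_conjTranspose_self T).smul (IsSelfAdjoint.all c⁻¹) :)

theorem trace_smul_mul_conjTranspose (hc : c ≠ 0) (hT : Tᴴ * T = c • 1) :
    trace (c⁻¹ • (T * Tᴴ)) = Fintype.card n := by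
  rw [trace_smul, trace_mul_comm, hT, trace_smul, trace_one, smul_smul, inv_mul_cancel₀ hc,
    one_smul]

end StarProjection

section TensorVec

variable {α l m n : Type*} [CommSemiring α] [StarRing α]

def tensorVec (A : Matrix n l α) (v : m → α) : Matrix (n × m) l α :=
  fun x j => A x.1 j * v x.2

theorem conjTranspose_tensorVec_mul_tensorVec [Fintype m] [Fintype n] (A A' : Matrix n l α)
    (v v' : m → α) :
    (tensorVec A v)ᴴ * tensorVec A' v' = (star v ⬝ᵥ v') • (Aᴴ * A') := by
  ext j j'
  simp only [mul_apply, conjTranspose_apply, tensorVec, smul_apply, smul_eq_mul, dotProduct,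
    Pi.star_apply, star_mul, Fintype.sum_prod_type, Finset.sum_mul, Finset.mul_sum]
  exact Finset.sum_congr rfl fun _ _ => Finset.sum_congr rfl fun _ _ => by ring

theorem tensorVec_mul_conjTranspose_tensorVec_apply [Fintype l] (A A' : Matrix n l α)
    (v v' : m → α) (x y : n × m) :
    (tensorVec A v * (tensorVec A' v')ᴴ) x y = (A * A'ᴴ) x.1 y.1 * (v x.2 * star (v' y.2)) := by
  simp only [mul_apply, conjTranspose_apply, tensorVec, star_mul, Finset.sum_mul]
  refine Finset.sum_congr rfl fun _ _ => ?_
  ring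

end TensorVec

end Matrix

open Matrix ZMod

def bellVec {α m n : Type*} (M : Matrix m n α) : m × n → α := fun x => M x.1 x.2

section WeylHeisenberg

variable {d : ℕ} [NeZero d]

theorem omega_pow (n : ℕ) : omega d ^ n = stdAddChar (n : ZMod d) := by
  rw [omega, ← Complex.exp_nat_mul, stdAddChar_apply, toCircle_natCast]
  ring_nf

theorem WH_apply (p q j k : ZMod d) :
    WH d p q j k = if j = k + p then stdAddChar (q * k) else 0 := by
  rw [WH, omega_pow]
  push_cast
  simp only [natCast_val, cast_id', id]

theorem star_stdAddChar_mul_stdAddChar (x y : ZMod d) :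
    star (stdAddChar x) * stdAddChar y = stdAddChar (y - x) := by
  rw [sub_eq_add_neg, AddChar.map_add_eq_mul, AddChar.map_neg_eq_conj, mul_comm]
  rfl

theorem WH_mul_conjTranspose (p q : ZMod d) : WH d p q * (WH d p q)ᴴ = 1 := by
  refine mul_eq_one_comm.mpr ?_
  ext k k'
  simp only [mul_apply, conjTranspose_apply, WH_apply, apply_ite star, star_zero, mul_ite,
    ite_mul, mul_zero, zero_mul, Finset.sum_ite_eq', Finset.mem_univ, if_true, add_left_inj,
    star_stdAddChar_mul_stdAddChar]
  split_ifs with h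
  · rw [h, sub_self, AddChar.map_zero_eq_one, one_apply_eq]
  · rw [one_apply_ne' h]

theorem star_bellVec_WH_dotProduct (p q p' q' : ZMod d) :
    star (bellVec (WH d p q)) ⬝ᵥ bellVec (WH d p' q') =
      if (p, q) = (p', q') then (d : ℂ) else 0 := by
  simp only [dotProduct, Fintype.sum_prod_type, Pi.star_apply, bellVec, WH_apply, apply_ite star,
    star_zero, mul_ite, ite_mul, mul_zero, zero_mul, star_stdAddChar_mul_stdAddChar]
  rw [Finset.sum_comm]
  simp only [Finset.sum_ite_eq', Finset.mem_univ, if_true, add_right_inj, Prod.mk.injEq]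
  by_cases hp : p = p'
  · subst hp
    simp only [if_true, true_and, ← sub_mul, mul_comm _ (_ : ZMod d)]
    rw [AddChar.sum_mulShift _ (isPrimitive_stdAddChar d), ZMod.card]
    simp only [sub_eq_zero, eq_comm, Nat.cast_ite, Nat.cast_zero]
  · simp [hp, Ne.symm hp]

variable (d) in
noncomputable def Ta (a : ZMod d × ZMod d → ℂ) :
    Matrix (ZMod d × ZMod d × ZMod d) (ZMod d) ℂ :=
  ∑ rs : ZMod d × ZMod d, a rs • tensorVec (WH d rs.1 rs.2)ᴴ (bellVec (WH d rs.1 rs.2))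

theorem Pa_eq_smul_Ta_mul_conjTranspose (a : ZMod d × ZMod d → ℂ) :
    Pa d a = (d : ℝ)⁻¹ • (Ta d a * (Ta d a)ᴴ) := by
  ext x y
  -- distribute over the left factor first, so that the sums come out in the order of `Pa`
  simp only [Ta, conjTranspose_sum, conjTranspose_smul, Matrix.sum_mul]
  simp only [Pa, Matrix.mul_sum, Matrix.smul_mul, Matrix.mul_smul, smul_smul, Matrix.smul_apply,
    Matrix.sum_apply, tensorVec_mul_conjTranspose_tensorVec_apply, conjTranspose_conjTranspose,
    bellVec, Fintype.sum_prod_type, Finset.mul_sum, smul_eq_mul, Complex.real_smul,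
    Complex.ofReal_inv, Complex.ofReal_natCast, Complex.star_def]
  refine Finset.sum_congr rfl fun _ _ => Finset.sum_congr rfl fun _ _ =>
    Finset.sum_congr rfl fun _ _ => Finset.sum_congr rfl fun _ _ => ?_
  ring

theorem conjTranspose_Ta_mul_Ta (a : ZMod d × ZMod d → ℂ)
    (ha : ∑ rs : ZMod d × ZMod d, ‖a rs‖ ^ 2 = 1) :
    (Ta d a)ᴴ * Ta d a = (d : ℝ) • 1 := by
  have ha' : ∑ rs, a rs * star (a rs) = 1 := by
    simp only [Complex.star_def, Complex.mul_conj', ← Complex.ofReal_pow, ← Complex.ofReal_sum,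
      ha, Complex.ofReal_one]
  simp only [Ta, conjTranspose_sum, conjTranspose_smul, Matrix.sum_mul, Matrix.mul_sum,
    Matrix.smul_mul, Matrix.mul_smul, smul_smul, conjTranspose_tensorVec_mul_tensorVec,
    star_bellVec_WH_dotProduct, conjTranspose_conjTranspose, ite_smul, zero_smul, smul_ite,
    smul_zero, Prod.mk.eta, Finset.sum_ite_eq', Finset.mem_univ, if_true, WH_mul_conjTranspose,
    ← Finset.sum_smul, ha', one_smul, Nat.cast_smul_eq_nsmul]

end WeylHeisenberg

/-- For normalized coefficients `a`, `P_a` is an orthogonal projection of trace `d`. -/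
theorem Pa_projection_trace (d : ℕ) [NeZero d] (a : ZMod d × ZMod d → ℂ)
    (ha : ∑ rs : ZMod d × ZMod d, ‖a rs‖ ^ 2 = 1) :
    (Pa d a)ᴴ = Pa d a ∧ Pa d a * Pa d a = Pa d a ∧ Matrix.trace (Pa d a) = (d : ℂ) := by
  have hd : (d : ℝ) ≠ 0 := Nat.cast_ne_zero.mpr (NeZero.ne d)
  have hT := conjTranspose_Ta_mul_Ta a ha
  have hP := isStarProjection_smul_mul_conjTranspose hd hT
  rw [← Pa_eq_smul_Ta_mul_conjTranspose] at hP
  refine ⟨hP.isSelfAdjoint, hP.isIdempotentElem, ?_⟩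
  rw [Pa_eq_smul_Ta_mul_conjTranspose, trace_smul_mul_conjTranspose hd hT, ZMod.card]
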